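/- arXiv:1902.01483 — 4 statements merged into one kernel-verified Lean document; each statement's English description precedes it below -/
import Mathlib

section
/- Let n, m be integers with 2 \le n < m, and let \alpha = 1 - 1/(2 V^2) for some integer V \ge m. Then (n - 1 + 2\alpha)/(n + 1) > (m - 1 + 2\alpha - 2/m)/(m + 1). -/
theorem stmt_4 (n m V : ℤ) (hn : 2 ≤ n) (hnm : n < m) (hV : m ≤ V)
    (α : ℝ) (hα : α = 1 - 1 / (2 * (V : ℝ) ^ 2)) :
    ((n : ℝ) - 1 + 2 * α) / ((n : ℝ) + 1) >
      ((m : ℝ) - 1 + 2 * α - 2 / (m : ℝ)) / ((m : ℝ) + 1) := by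
  subst hα
  have hn' : (2:ℝ) ≤ (n:ℝ) := by exact_mod_cast hn
  have hnm' : (n:ℝ) < (m:ℝ) := by exact_mod_cast hnm
  have hV' : (m:ℝ) ≤ (V:ℝ) := by exact_mod_cast hV
  have hm : (0:ℝ) < (m:ℝ) := by linarith
  have hVpos : (0:ℝ) < (V:ℝ) := by linarith
  have hV2 : (0:ℝ) < (V:ℝ)^2 := by positivity
  rw [gt_iff_lt, div_lt_div_iff₀ (by linarith) (by linarith)]
  have key : 2 * ((n:ℝ)+1) * (V:ℝ)^2 > (m:ℝ) * ((m:ℝ) - n) := by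
    nlinarith [sq_nonneg ((V:ℝ) - m), sq_nonneg ((m:ℝ))]
  have hm0 : (m:ℝ) ≠ 0 := ne_of_gt hm
  have hV0 : (V:ℝ) ≠ 0 := ne_of_gt hVpos
  rw [show ∀ a b : ℝ, (a < b) = (0 < b - a) from fun a b => by simp [sub_pos]]
  have expand : ((n:ℝ) - 1 + 2 * (1 - 1 / (2 * (V:ℝ)^2))) * ((m:ℝ) + 1)
      - ((m:ℝ) - 1 + 2 * (1 - 1 / (2 * (V:ℝ)^2)) - 2 / (m:ℝ)) * ((n:ℝ) + 1)
      = (2 * ((n:ℝ)+1) * (V:ℝ)^2 - (m:ℝ) * ((m:ℝ) - n)) / ((m:ℝ) * (V:ℝ)^2) := by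
    field_simp
    ring
  rw [expand]
  exact div_pos (by linarith [key]) (by positivity)
end

section
/- Let l \ge 2 be an integer, P = l + 1, p = P - 1/(2P^2), and let n, m be integers with 2 \le n < m \le l. Then (2p - n + 1)/(2P - n + 1) < (2p + 2/m - m + 1)/(2P - m + 1). -/
theorem stmt_6 (l : ℤ) (hl : 2 ≤ l) (P p : ℝ)
    (hP : P = (l : ℝ) + 1) (hp : p = P - 1 / (2 * P ^ 2))
    (n m : ℤ) (hn : 2 ≤ n) (hnm : n < m) (hml : m ≤ l) :
    (2 * p - (n : ℝ) + 1) / (2 * P - (n : ℝ) + 1) <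
      (2 * p + 2 / (m : ℝ) - (m : ℝ) + 1) / (2 * P - (m : ℝ) + 1) := by
  have hN : (2:ℝ) ≤ (n:ℝ) := by exact_mod_cast hn
  have hNM : (n:ℝ) + 1 ≤ (m:ℝ) := by exact_mod_cast hnm
  have hML : (m:ℝ) ≤ P - 1 := by
    rw [hP]; have : (m:ℝ) ≤ (l:ℝ) := by exact_mod_cast hml
    linarith
  have hP3 : (3:ℝ) ≤ P := by
    rw [hP]; have : (2:ℝ) ≤ (l:ℝ) := by exact_mod_cast hl
    linarith
  have hMpos : (0:ℝ) < (m:ℝ) := by linarith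
  have hPpos : (0:ℝ) < P := by linarith
  have hd1 : (0:ℝ) < 2 * P - (n:ℝ) + 1 := by linarith
  have hd2 : (0:ℝ) < 2 * P - (m:ℝ) + 1 := by linarith
  rw [div_lt_div_iff₀ hd1 hd2]
  rw [hp]
  have hP2 : (0:ℝ) < P ^ 2 := by positivity
  have hMne : ((m:ℝ)) ≠ 0 := ne_of_gt hMpos
  have hPne : P ≠ 0 := ne_of_gt hPpos
  rw [show (2 * (P - 1 / (2 * P ^ 2)) - (n:ℝ) + 1) = (2 * P - (n:ℝ) + 1) - 1/P^2 by
    field_simp; ring, show (2 * (P - 1 / (2 * P ^ 2)) + 2 / (m:ℝ) - (m:ℝ) + 1)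
      = (2 * P - (m:ℝ) + 1) - 1/P^2 + 2/(m:ℝ) by field_simp; ring]
  have key : 1/P^2 * ((m:ℝ) - (n:ℝ)) < 2/(m:ℝ) * (2*P - (n:ℝ) + 1) := by
    rw [div_mul_eq_mul_div, div_mul_eq_mul_div, div_lt_div_iff₀ hP2 hMpos]
    nlinarith [mul_pos hPpos hPpos, sq_nonneg ((m:ℝ) - P)]
  nlinarith [key]
end

section
/- Consider a finite weighted complete graph on vertex set V with nonnegative edge weights, whose vertices are ordered v_1, ..., v_{|V|} by iteratively removing the vertex of minimum total adjacent weight (SortVertices). Let 1 \le b < c \le |V|, U = \{v_b, ..., v_c\}, W = \{v_1, ..., v_{b-1}\}. Assume there exists \alpha \ge 0 such that for all v \in U, \alpha w(v, W) \ge w(v, U). Let f = d(v_b, W). Then for every nonempty X \subseteq U, d(X, X \cup W) \le (1 + \alpha)^2 f. -/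
/-- The set of (cross) edges with one endpoint in `X` and the other in `W`,
as unordered pairs of distinct vertices. -/
def crossE {V : Type*} [DecidableEq V] (X W : Finset V) : Finset (Sym2 V) :=
  ((X ×ˢ W).filter fun p => p.1 ≠ p.2).image (fun p => Sym2.mk p.1 p.2)

/-- Total weight of the cross edges from `X` to `W`. -/
noncomputable def wsum {V : Type*} [DecidableEq V] (w : Sym2 V → ℝ)
    (X W : Finset V) : ℝ :=
  ∑ e ∈ crossE X W, w e

/-- Density of the cross edges from `X` to `W`. -/
noncomputable def dens {V : Type*} [DecidableEq V] (w : Sym2 V → ℝ)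
    (X W : Finset V) : ℝ :=
  wsum w X W / ((crossE X W).card : ℝ)

/-!
Write `w(x, S)` for the weight from `x` to `S`. The removal order gives, for `x = v_i ∈ U`,
`w(x, W) ≤ w(x, {v_1, …, v_i}) ≤ w(v_b, {v_1, …, v_i}) ≤ w(v_b, U ∪ W)`, and the hypothesis
on `α` bounds `w(y, U ∪ W)` by `(1 + α) w(y, W)` for every `y ∈ U`. Applying this bound once
at `v_b` and once at `x` gives `w(x, X ∪ W) ≤ (1 + α)² w(v_b, W)` for `x ∈ X`. Summing over
`X` and using that `X ∪ W` has at least `|X| |W|` cross edges to `X` yields the density bound.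
-/

theorem Finset.sum_biUnion_le_sum_sum {ι β M : Type*} [DecidableEq β] [AddCommMonoid M]
    [PartialOrder M] [IsOrderedAddMonoid M] {s : Finset ι} {t : ι → Finset β} {g : β → M}
    (hg : ∀ e ∈ s.biUnion t, 0 ≤ g e) :
    ∑ e ∈ s.biUnion t, g e ≤ ∑ i ∈ s, ∑ e ∈ t i, g e := by
  have hsigma : s.biUnion t = (s.sigma t).image Sigma.snd := by ext; simp
  rw [hsigma] at hg ⊢
  exact (sum_image_le_of_nonneg hg).trans_eq (sum_sigma s t fun p => g p.2)

section CrossEdges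

open Finset hiding dens

variable {V : Type*} [DecidableEq V] {w : Sym2 V → ℝ}

lemma crossE_mono_right (X : Finset V) {Y Y' : Finset V} (h : Y ⊆ Y') :
    crossE X Y ⊆ crossE X Y' :=
  image_subset_image (filter_subset_filter _ (product_subset_product_right h))

lemma crossE_union_right (X A B : Finset V) :
    crossE X (A ∪ B) = crossE X A ∪ crossE X B := by
  simp only [crossE, product_union, filter_union, image_union]

lemma biUnion_crossE_singleton (X Y : Finset V) :
    X.biUnion (fun x => crossE {x} Y) = crossE X Y := by
  ext e
  simp only [crossE, mem_biUnion, mem_image, mem_filter, mem_product, mem_singleton]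
  constructor
  · rintro ⟨x, hx, ⟨x', y⟩, ⟨⟨rfl, hy⟩, hne⟩, rfl⟩
    exact ⟨(x', y), ⟨⟨hx, hy⟩, hne⟩, rfl⟩
  · rintro ⟨⟨x, y⟩, ⟨⟨hx, hy⟩, hne⟩, rfl⟩
    exact ⟨x, hx, (x, y), ⟨⟨rfl, hy⟩, hne⟩, rfl⟩

lemma card_crossE_of_disjoint {X Y : Finset V} (h : Disjoint X Y) :
    #(crossE X Y) = #X * #Y := by
  have hne : ∀ p ∈ X ×ˢ Y, p.1 ≠ p.2 := fun p hp heq =>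
    disjoint_left.1 h (mem_product.1 hp).1 (heq ▸ (mem_product.1 hp).2)
  rw [crossE, filter_true_of_mem hne, card_image_of_injOn, card_product]
  rintro ⟨a, b⟩ hab ⟨c, d⟩ hcd heq
  rcases Sym2.mk_eq_mk_iff.1 heq with heq | heq
  · exact heq
  · simp only [Prod.swap_prod_mk, Prod.mk.injEq] at heq
    exact (disjoint_left.1 h (mem_product.1 hab).1 (heq.1 ▸ (mem_product.1 hcd).2)).elim

lemma wsum_nonneg (hw : ∀ e, 0 ≤ w e) (X Y : Finset V) : 0 ≤ wsum w X Y :=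
  sum_nonneg fun e _ => hw e

lemma wsum_empty_right (X : Finset V) : wsum w X ∅ = 0 := by
  simp [wsum, crossE]

lemma wsum_mono_right (hw : ∀ e, 0 ≤ w e) (X : Finset V) {Y Y' : Finset V} (h : Y ⊆ Y') :
    wsum w X Y ≤ wsum w X Y' :=
  sum_le_sum_of_subset_of_nonneg (crossE_mono_right X h) fun e _ _ => hw e

lemma wsum_union_right_le (hw : ∀ e, 0 ≤ w e) (X A B : Finset V) :
    wsum w X (A ∪ B) ≤ wsum w X A + wsum w X B := by
  rw [wsum, wsum, wsum, crossE_union_right, ← sum_union_inter]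
  exact le_add_of_nonneg_right (sum_nonneg fun e _ => hw e)

lemma wsum_le_sum_wsum_singleton (hw : ∀ e, 0 ≤ w e) (X Y : Finset V) :
    wsum w X Y ≤ ∑ x ∈ X, wsum w {x} Y := by
  rw [wsum, ← biUnion_crossE_singleton]
  exact sum_biUnion_le_sum_sum fun e _ => hw e

lemma dens_union_le_mul_dens (hw : ∀ e, 0 ≤ w e) {X Y : Finset V} {y : V} {C : ℝ}
    (hXY : Disjoint X Y) (hyY : y ∉ Y) (hX : X.Nonempty)
    (h : ∀ x ∈ X, wsum w {x} (X ∪ Y) ≤ C * wsum w {y} Y) :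
    dens w X (X ∪ Y) ≤ C * dens w {y} Y := by
  have hnum : wsum w X (X ∪ Y) ≤ #X * (C * wsum w {y} Y) :=
    (wsum_le_sum_wsum_singleton hw X _).trans
      ((sum_le_card_nsmul _ _ _ h).trans_eq (nsmul_eq_mul _ _))
  have hden : (#X * #Y : ℝ) ≤ #(crossE X (X ∪ Y)) := by
    exact_mod_cast (card_crossE_of_disjoint hXY).symm.le.trans
      (card_le_card (crossE_mono_right X subset_union_right))
  rw [dens, dens, card_crossE_of_disjoint (disjoint_singleton_left.2 hyY), card_singleton,
    one_mul]
  -- `Y = ∅` is separate: then `dens w {y} Y = 0 / 0 = 0`.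
  rcases Y.eq_empty_or_nonempty with rfl | hY
  · rw [wsum_empty_right, mul_zero, mul_zero] at hnum
    rw [wsum_empty_right, zero_div, mul_zero]
    exact div_nonpos_of_nonpos_of_nonneg hnum (Nat.cast_nonneg _)
  · have hXpos : (0 : ℝ) < #X := by exact_mod_cast hX.card_pos
    calc wsum w X (X ∪ Y) / #(crossE X (X ∪ Y))
        ≤ #X * (C * wsum w {y} Y) / (#X * #Y) :=
          div_le_div₀ ((wsum_nonneg hw _ _).trans hnum) hnum
            (mul_pos hXpos (by exact_mod_cast hY.card_pos)) hden
      _ = C * (wsum w {y} Y / #Y) := by field_simp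

end CrossEdges

section RemovalOrder

open Finset

variable {V ι : Type*} [DecidableEq V] {w : Sym2 V → ℝ}

lemma Finset.Iic_subset_Icc_union_Iio [LinearOrder ι] [LocallyFiniteOrder ι]
    [LocallyFiniteOrderBot ι] {b c i : ι} (hic : i ≤ c) : Iic i ⊆ Icc b c ∪ Iio b := by
  intro j hj
  rw [mem_Iic] at hj
  rcases lt_or_ge j b with hjb | hbj
  · exact mem_union_right _ (mem_Iio.2 hjb)
  · exact mem_union_left _ (mem_Icc.2 ⟨hbj, hj.trans hic⟩)

lemma disjoint_image_Icc_image_Iio [Preorder ι] [LocallyFiniteOrder ι] [LocallyFiniteOrderBot ι]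
    {v : ι → V} (hv : Function.Injective v) (b c : ι) :
    Disjoint ((Icc b c).image v) ((Iio b).image v) := by
  rw [disjoint_image hv]
  exact disjoint_left.2 fun j hj hj' => (mem_Icc.1 hj).1.not_gt (mem_Iio.1 hj')

lemma wsum_image_Iio_le_wsum_image_Icc_union [LinearOrder ι] [LocallyFiniteOrder ι]
    [LocallyFiniteOrderBot ι] (hw : ∀ e, 0 ≤ w e) (v : ι → V)
    (horder : ∀ c : ι, ∀ x ∈ (Iic c).image v,
      wsum w {v c} ((Iic c).image v) ≤ wsum w {x} ((Iic c).image v))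
    {b c i : ι} (hbi : b ≤ i) (hic : i ≤ c) :
    wsum w {v i} ((Iio b).image v) ≤ wsum w {v b} ((Icc b c).image v ∪ (Iio b).image v) :=
  calc wsum w {v i} ((Iio b).image v)
      ≤ wsum w {v i} ((Iic i).image v) :=
        wsum_mono_right hw _
          (image_subset_image (Iio_subset_Iic_self.trans (Iic_subset_Iic.2 hbi)))
    _ ≤ wsum w {v b} ((Iic i).image v) := horder i (v b) (mem_image_of_mem v (mem_Iic.2 hbi))
    _ ≤ wsum w {v b} ((Icc b c).image v ∪ (Iio b).image v) := by
        rw [← image_union]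
        exact wsum_mono_right hw _ (image_subset_image (Iic_subset_Icc_union_Iio hic))

end RemovalOrder

theorem stmt_8_general {V : Type*} [DecidableEq V]
    (w : Sym2 V → ℝ) (hw : ∀ e, 0 ≤ w e)
    (n : ℕ) (v : Fin n ≃ V)
    -- the order is produced by iteratively removing the vertex of minimum
    -- total adjacent weight:
    (horder : ∀ c : Fin n, ∀ x ∈ (Finset.Iic c).image v,
      wsum w {v c} ((Finset.Iic c).image v) ≤ wsum w {x} ((Finset.Iic c).image v))
    (b c : Fin n) (hbc : b < c)
    (U W : Finset V) (hU : U = (Finset.Icc b c).image v)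
    (hW : W = (Finset.Iio b).image v)
    (α : ℝ) (hα : 0 ≤ α)
    (hcross : ∀ x ∈ U, wsum w {x} U ≤ α * wsum w {x} W)
    (f : ℝ) (hf : f = dens w {v b} W)
    (X : Finset V) (hX : X ⊆ U) (hXne : X.Nonempty) :
    dens w X (X ∪ W) ≤ (1 + α) ^ 2 * f := by
  have hbU : v b ∈ U := hU ▸ Finset.mem_image_of_mem v (Finset.mem_Icc.2 ⟨le_rfl, hbc.le⟩)
  have hUW : Disjoint U W := hU ▸ hW ▸ disjoint_image_Icc_image_Iio v.injective b c
  have hlocal : ∀ x ∈ U, wsum w {x} (U ∪ W) ≤ (1 + α) * wsum w {x} W := fun x hx => by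
    linarith [wsum_union_right_le hw {x} U W, hcross x hx]
  have hprefix : ∀ x ∈ U, wsum w {x} W ≤ (1 + α) * wsum w {v b} W := by
    intro x hx
    obtain ⟨i, hi, rfl⟩ := Finset.mem_image.1 (hU ▸ hx)
    have hprefix_order : wsum w {v i} W ≤ wsum w {v b} (U ∪ W) := by
      rw [hU, hW]
      exact wsum_image_Iio_le_wsum_image_Icc_union hw v horder
        (Finset.mem_Icc.1 hi).1 (Finset.mem_Icc.1 hi).2
    exact hprefix_order.trans (hlocal _ hbU)
  rw [hf]
  refine dens_union_le_mul_dens hw (hUW.mono_left hX) (Finset.disjoint_left.1 hUW hbU) hXne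
    fun x hx => ?_
  calc wsum w {x} (X ∪ W)
      ≤ wsum w {x} (U ∪ W) := wsum_mono_right hw _ (Finset.union_subset_union_left hX)
    _ ≤ (1 + α) * wsum w {x} W := hlocal x (hX hx)
    _ ≤ (1 + α) * ((1 + α) * wsum w {v b} W) :=
        mul_le_mul_of_nonneg_left (hprefix x (hX hx)) (by linarith)
    _ = (1 + α) ^ 2 * wsum w {v b} W := by ring

theorem stmt_8 {V : Type*} [Fintype V] [DecidableEq V]
    (w : Sym2 V → ℝ) (hw : ∀ e, 0 ≤ w e)
    (n : ℕ) (hn : n = Fintype.card V) (v : Fin n ≃ V)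
    -- the order is produced by iteratively removing the vertex of minimum
    -- total adjacent weight:
    (horder : ∀ c : Fin n, ∀ x ∈ (Finset.Iic c).image v,
      wsum w {v c} ((Finset.Iic c).image v) ≤ wsum w {x} ((Finset.Iic c).image v))
    (b c : Fin n) (hbc : b < c)
    (U W : Finset V) (hU : U = (Finset.Icc b c).image v)
    (hW : W = (Finset.Iio b).image v)
    (α : ℝ) (hα : 0 ≤ α)
    (hcross : ∀ x ∈ U, wsum w {x} U ≤ α * wsum w {x} W)
    (f : ℝ) (hf : f = dens w {v b} W)
    (X : Finset V) (hX : X ⊆ U) (hXne : X.Nonempty) :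
    dens w X (X ∪ W) ≤ (1 + α) ^ 2 * f :=
  stmt_8_general w hw n v horder b c hbc U W hU hW α hα hcross f hf X hX hXne
end

section
/- Let C_1 and C_2 be finite nonempty disjoint sets of real-weighted elements, partitioned as C_1 = D_{11} \cup D_{12} and C_2 = D_{21} \cup D_{22}. Write \mu_{ij} for the mean weight of D_{ij}, \lambda_i for the mean weight of C_i, and for a finite multiset F with mean m let s(F) = \sum_{e \in F} (w(e) - m)^2. Suppose \lambda_2 \ge \lambda_1, and suppose s(C_1) + s(C_2) \le s(C_1 \cup D_{21}) + s(D_{22}) and s(C_1) + s(C_2) \le s(D_{12}) + s(C_2 \cup D_{11}). Then \mu_{11} \le \mu_{21}. -/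
/-!
Moving a block `B` from its cluster `B ∪ G` into another cluster `A` raises the total score by the
merging cost `|A||B|/(|A|+|B|) (μ_A - μ_B)²` and lowers it by at least `|B| (μ_B - μ_{B∪G})²`
(bias-variance decomposition of `B ∪ G` around its mean). If the move does not lower the score,
then `(|A|+|B|) (μ_B - μ_{B∪G})² ≤ |A| (μ_B - μ_A)²`: `μ_B` is no farther from the mean of its
own cluster than from that of `A`, and strictly closer unless `μ_B = μ_{B∪G}` (this strictness
settles the case `λ₁ = λ₂`). Applied to `D₂₁` and to `D₁₁`, it puts `μ₂₁` above and `μ₁₁` below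
`(λ₁ + λ₂)/2`.
-/

/-- Mean weight of a finite set of weighted elements. -/
noncomputable def meanW {E : Type*} (w : E → ℝ) (F : Finset E) : ℝ :=
  (∑ e ∈ F, w e) / (F.card : ℝ)

/-- Density-uniformity score: sum of squared deviations from the mean. -/
noncomputable def scoreW {E : Type*} (w : E → ℝ) (F : Finset E) : ℝ :=
  ∑ e ∈ F, (w e - meanW w F) ^ 2

lemma card_mul_meanW {E : Type*} (w : E → ℝ) (F : Finset E) :
    (F.card : ℝ) * meanW w F = ∑ e ∈ F, w e := by
  rcases F.eq_empty_or_nonempty with rfl | hF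
  · simp
  · exact mul_div_cancel₀ _ (by exact_mod_cast hF.card_pos.ne')

lemma sum_sq_sub_eq_scoreW_add {E : Type*} (w : E → ℝ) (F : Finset E) (x : ℝ) :
    ∑ e ∈ F, (w e - x) ^ 2 = scoreW w F + F.card * (meanW w F - x) ^ 2 := by
  have hsum := card_mul_meanW w F
  have expand : ∀ e ∈ F, (w e - x) ^ 2 =
      (w e - meanW w F) ^ 2 + 2 * (meanW w F - x) * w e + (x ^ 2 - meanW w F ^ 2) :=
    fun _ _ ↦ by ring
  rw [Finset.sum_congr rfl expand, Finset.sum_add_distrib, Finset.sum_add_distrib,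
    ← Finset.mul_sum, Finset.sum_const, nsmul_eq_mul, ← hsum, scoreW]
  ring

section Union

variable {E : Type*} [DecidableEq E] (w : E → ℝ) {F G : Finset E}

lemma card_add_card_mul_meanW_union (hd : Disjoint F G) :
    ((F.card : ℝ) + G.card) * meanW w (F ∪ G) = F.card * meanW w F + G.card * meanW w G := by
  rw [card_mul_meanW, card_mul_meanW, ← Nat.cast_add, ← Finset.card_union_of_disjoint hd,
    card_mul_meanW, Finset.sum_union hd]

lemma scoreW_union (hd : Disjoint F G) :
    scoreW w (F ∪ G) = scoreW w F + scoreW w G +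
      (F.card * (meanW w F - meanW w (F ∪ G)) ^ 2 +
        G.card * (meanW w G - meanW w (F ∪ G)) ^ 2) := by
  conv_lhs => rw [scoreW, Finset.sum_union hd, sum_sq_sub_eq_scoreW_add,
    sum_sq_sub_eq_scoreW_add]
  ring

end Union

lemma card_add_card_mul_sq_le_of_scoreW_le {E : Type*} [DecidableEq E] (w : E → ℝ)
    {A B G : Finset E} (hAB : Disjoint A B) (hBG : Disjoint B G) (hB : B.Nonempty)
    (h : scoreW w A + scoreW w (B ∪ G) ≤ scoreW w (A ∪ B) + scoreW w G) :
    ((A.card : ℝ) + B.card) * (meanW w B - meanW w (B ∪ G)) ^ 2 ≤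
      A.card * (meanW w B - meanW w A) ^ 2 := by
  set a : ℝ := (A.card : ℝ)
  set b : ℝ := (B.card : ℝ)
  have hb : 0 < b := Nat.cast_pos.2 hB.card_pos
  set x := meanW w A
  set y := meanW w B
  set m := meanW w (B ∪ G)
  set m' := meanW w (A ∪ B)
  have hm' : (a + b) * m' = a * x + b * y := card_add_card_mul_meanW_union w hAB
  have merged : (a + b) * (a * (x - m') ^ 2 + b * (y - m') ^ 2) = a * b * (y - x) ^ 2 := by
    linear_combination ((a + b) * m' - (a * x + b * y)) * hm'
  have moved : b * (y - m) ^ 2 ≤ a * (x - m') ^ 2 + b * (y - m') ^ 2 := by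
    have hG : 0 ≤ (G.card : ℝ) * (meanW w G - m) ^ 2 := by positivity
    linarith [scoreW_union w hAB, scoreW_union w hBG]
  refine le_of_mul_le_mul_left ?_ hb
  calc b * ((a + b) * (y - m) ^ 2) = (a + b) * (b * (y - m) ^ 2) := by ring
    _ ≤ (a + b) * (a * (x - m') ^ 2 + b * (y - m') ^ 2) := by gcongr
    _ = b * (a * (y - x) ^ 2) := by rw [merged]; ring

lemma add_le_two_mul_of_add_mul_sq_le {a b μ l₁ l₂ : ℝ} (ha : 0 ≤ a) (hb : 0 < b)
    (hl : l₁ ≤ l₂) (h : (a + b) * (μ - l₂) ^ 2 ≤ a * (μ - l₁) ^ 2) :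
    l₁ + l₂ ≤ 2 * μ := by
  by_contra! hlt
  have closer : 0 ≤ a * ((μ - l₂) ^ 2 - (μ - l₁) ^ 2) := by
    have : (μ - l₂) ^ 2 - (μ - l₁) ^ 2 = (l₂ - l₁) * (l₁ + l₂ - 2 * μ) := by ring
    rw [this]
    exact mul_nonneg ha (mul_nonneg (sub_nonneg.2 hl) (sub_nonneg.2 hlt.le))
  have hsq : (μ - l₂) ^ 2 ≤ 0 := nonpos_of_mul_nonpos_right (by linarith) hb
  have hμ : μ = l₂ :=
    sub_eq_zero.1 (pow_eq_zero_iff two_ne_zero |>.1 (hsq.antisymm (sq_nonneg _)))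
  linarith

theorem stmt_11_general {E : Type*} [DecidableEq E] (w : E → ℝ)
    (C₁ C₂ D₁₁ D₁₂ D₂₁ D₂₂ : Finset E)
    (hC : Disjoint C₁ C₂)
    (h1 : C₁ = D₁₁ ∪ D₁₂) (h1d : Disjoint D₁₁ D₁₂)
    (h2 : C₂ = D₂₁ ∪ D₂₂) (h2d : Disjoint D₂₁ D₂₂)
    (hD₁₁ : D₁₁.Nonempty) (hD₂₁ : D₂₁.Nonempty)
    (hlam : meanW w C₁ ≤ meanW w C₂)
    (hs1 : scoreW w C₁ + scoreW w C₂ ≤ scoreW w (C₁ ∪ D₂₁) + scoreW w D₂₂)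
    (hs2 : scoreW w C₁ + scoreW w C₂ ≤ scoreW w D₁₂ + scoreW w (C₂ ∪ D₁₁)) :
    meanW w D₁₁ ≤ meanW w D₂₁ := by
  have hC₁D₂₁ : Disjoint C₁ D₂₁ := hC.mono_right (h2 ▸ Finset.subset_union_left)
  have hC₂D₁₁ : Disjoint C₂ D₁₁ := hC.symm.mono_right (h1 ▸ Finset.subset_union_left)
  subst h1 h2
  have k₂₁ := card_add_card_mul_sq_le_of_scoreW_le w hC₁D₂₁ h2d hD₂₁ hs1
  have k₁₁ := card_add_card_mul_sq_le_of_scoreW_le w hC₂D₁₁ h1d hD₁₁ (by linarith)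
  have above := add_le_two_mul_of_add_mul_sq_le (by positivity)
    (by exact_mod_cast hD₂₁.card_pos) hlam k₂₁
  have below := add_le_two_mul_of_add_mul_sq_le (a := (D₂₁ ∪ D₂₂).card) (b := D₁₁.card)
    (μ := -meanW w D₁₁) (by positivity) (by exact_mod_cast hD₁₁.card_pos) (neg_le_neg hlam)
    (by convert k₁₁ using 2 <;> ring)
  linarith

theorem stmt_11 {E : Type*} [DecidableEq E] (w : E → ℝ)
    (C₁ C₂ D₁₁ D₁₂ D₂₁ D₂₂ : Finset E)
    (hC : Disjoint C₁ C₂) (hC₁ : C₁.Nonempty) (hC₂ : C₂.Nonempty)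
    (h1 : C₁ = D₁₁ ∪ D₁₂) (h1d : Disjoint D₁₁ D₁₂)
    (h2 : C₂ = D₂₁ ∪ D₂₂) (h2d : Disjoint D₂₁ D₂₂)
    (hD₁₁ : D₁₁.Nonempty) (hD₂₁ : D₂₁.Nonempty)
    (hlam : meanW w C₁ ≤ meanW w C₂)
    (hs1 : scoreW w C₁ + scoreW w C₂ ≤ scoreW w (C₁ ∪ D₂₁) + scoreW w D₂₂)
    (hs2 : scoreW w C₁ + scoreW w C₂ ≤ scoreW w D₁₂ + scoreW w (C₂ ∪ D₁₁)) :
    meanW w D₁₁ ≤ meanW w D₂₁ :=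
  stmt_11_general w C₁ C₂ D₁₁ D₁₂ D₂₁ D₂₂ hC h1 h1d h2 h2d hD₁₁ hD₂₁ hlam hs1 hs2
end
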